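/- arXiv:math/0401439 — 2 statements merged into one kernel-verified Lean document; each statement's English description precedes it below -/
import Mathlib

section
/- If K is a compact polynomially convex subset of ℂ^n, then K × [0,1] (viewing [0,1] ⊂ ℝ ⊂ ℂ) is polynomially convex in ℂ^{n+1}. -/
/-!
A point off `K × [0,1]` either has its first `n` coordinates off `K`, and is then separated
by a polynomial in those, or has its last coordinate `w` off the segment, and is then
separated by a polynomial in the last coordinate alone: for small `c > 0`,
`q(z) = 1 - c (z - Re w)²` satisfies `0 < q(t) ≤ 1` on the segment and `q(w) = 1 + c (Im w)²`,
so `q(t) < |q(w)|` unless `t = w`.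
-/

open Set Function MvPolynomial

def IsPolynomiallyConvex {m : ℕ} (L : Set (Fin m → ℂ)) : Prop :=
  ∀ p ∉ L, ∃ P : MvPolynomial (Fin m) ℂ, ∀ z ∈ L, ‖eval z P‖ < ‖eval p P‖

def IsPolynomiallyConvexOne (S : Set ℂ) : Prop :=
  ∀ w ∉ S, ∃ q : Polynomial ℂ, ∀ s ∈ S, ‖q.eval s‖ < ‖q.eval w‖

theorem isPolynomiallyConvexOne_ofReal_image {S : Set ℝ} (hS : Bornology.IsBounded S) :
    IsPolynomiallyConvexOne (Complex.ofReal '' S) := by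
  intro w hw
  obtain ⟨R, hR⟩ := hS.exists_norm_le
  set x := w.re
  set c : ℝ := 1 / ((|R| + |x|) ^ 2 + 1)
  have hc : 0 < c := by positivity
  set q : Polynomial ℂ := 1 - Polynomial.C (c : ℂ) * (Polynomial.X - Polynomial.C (x : ℂ)) ^ 2
  refine ⟨q, ?_⟩
  rintro _ ⟨t, ht, rfl⟩
  have hq_t : q.eval (t : ℂ) = ((1 - c * (t - x) ^ 2 : ℝ) : ℂ) := by simp [q]
  have hq_w : q.eval w = ((1 + c * w.im ^ 2 : ℝ) : ℂ) := by
    have hw_sub : w - x = w.im * Complex.I := by apply Complex.ext <;> simp [x]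
    simp [q, hw_sub, mul_pow]
  have hsmall : c * (t - x) ^ 2 < 1 := by
    rw [div_mul_eq_mul_div, one_mul, div_lt_one (by positivity)]
    have hdiff : |t - x| ≤ |R| + |x| :=
      (abs_sub _ _).trans (by linarith [(Real.norm_eq_abs t) ▸ hR t ht, le_abs_self R])
    nlinarith [sq_abs (t - x), abs_nonneg (t - x)]
  have hdist : 0 < (t - x) ^ 2 + w.im ^ 2 := by
    have hne : (t : ℂ) - w ≠ 0 := sub_ne_zero.2 fun h => hw ⟨t, ht, h⟩
    have := pow_pos (norm_pos_iff.2 hne) 2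
    rw [Complex.sq_norm, Complex.normSq_apply] at this
    simpa [x, sq] using this
  rw [hq_t, hq_w, Complex.norm_real, Complex.norm_real, Real.norm_of_nonneg (by linarith),
    Real.norm_of_nonneg (by positivity)]
  nlinarith

theorem IsPolynomiallyConvex.prod_last {n : ℕ} {K : Set (Fin n → ℂ)}
    (hK : IsPolynomiallyConvex K) {S : Set ℂ} (hS : IsPolynomiallyConvexOne S) :
    IsPolynomiallyConvex {z : Fin (n + 1) → ℂ | Fin.init z ∈ K ∧ z (Fin.last n) ∈ S} := by
  intro p hp
  by_cases hpK : Fin.init p ∈ K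
  · obtain ⟨q, hq⟩ := hS _ fun hpS => hp ⟨hpK, hpS⟩
    refine ⟨q.toMvPolynomial (Fin.last n), fun z hz => ?_⟩
    simpa only [eval_toMvPolynomial] using hq _ hz.2
  · obtain ⟨P, hP⟩ := hK _ hpK
    refine ⟨rename Fin.castSucc P, fun z hz => ?_⟩
    rw [eval_rename, eval_rename]
    exact hP _ hz.1

theorem polynomiallyConvex_prod_unitInterval_general
    {n : ℕ} (K : Set (Fin n → ℂ))
    (hKpc : IsPolynomiallyConvex K) :
    IsPolynomiallyConvex
      {z : Fin (n + 1) → ℂ |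
        (fun i : Fin n => z i.castSucc) ∈ K ∧
        z (Fin.last n) ∈ Complex.ofReal '' Set.Icc (0 : ℝ) 1} :=
  hKpc.prod_last (isPolynomiallyConvexOne_ofReal_image (Metric.isBounded_Icc 0 1))

/-- If `K` is a compact polynomially convex subset of `ℂⁿ`, then
`K × [0,1]` (viewing `[0,1] ⊆ ℝ ⊆ ℂ`) is polynomially convex in `ℂⁿ⁺¹`. -/
theorem polynomiallyConvex_prod_unitInterval
    {n : ℕ} (K : Set (Fin n → ℂ)) (hK : IsCompact K)
    (hKpc : IsPolynomiallyConvex K) :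
    IsPolynomiallyConvex
      {z : Fin (n + 1) → ℂ |
        (fun i : Fin n => z i.castSucc) ∈ K ∧
        z (Fin.last n) ∈ Complex.ofReal '' Set.Icc (0 : ℝ) 1} :=
  polynomiallyConvex_prod_unitInterval_general K hKpc
end

section
/- Let E₁ → Z and E₂ → Z be holomorphic vector bundles and s₁ : E₁ → Z, s₂ : E₂ → Z sprays on a complex manifold Z (i.e., s_j(0_z) = z for all z). Form the composed bundle E^{(2)} = s₁*(E₂) → E₁ with composed spray s^{(2)}(e₁, e₂) = s₂(e₂). Then the restriction of the differential of s^{(2)} at the zero section over z ∈ Z to the subspace E_{1,z} ⊕ E_{2,z} of T_{0_z}E^{(2)} equals (ds₁)_{0_z} ⊕ (ds₂)_{0_z}; in particular, if (ds₁)_{0_z}(E_{1,z}) + (ds₂)_{0_z}(E_{2,z}) = T_z Z for every z, then the composed spray s^{(2)} is dominating. -/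
open scoped Manifold Topology
open Set Function Bundle

/-!
In bundle charts the lift `s₁*(E₂) → E₂`, `(e₁, e₂) ↦ e₂`, reads `(x, y) ↦ (s₁ x, y)`, so by the
chain rule `ds⁽²⁾ (u, w) = ds₂ (ds₁ u, w)`. The zero section has differential `v ↦ (v, 0)` in
these charts, so `s₂ ∘ 0 = id` forces `ds₂ (v, 0) = v`, whence
`ds₂ (ds₁ u, w) = ds₁ u + ds₂ (0, w)`; domination follows at once.
-/

namespace Bundle

variable {𝕜 : Type*} [NontriviallyNormedField 𝕜]
  {EB : Type*} [NormedAddCommGroup EB] [NormedSpace 𝕜 EB]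
  {HB : Type*} [TopologicalSpace HB] {IB : ModelWithCorners 𝕜 EB HB}
  {B : Type*} [TopologicalSpace B] [ChartedSpace HB B]
  {F : Type*} [NormedAddCommGroup F] [NormedSpace 𝕜 F]
  (E : B → Type*) [TopologicalSpace (TotalSpace F E)] [∀ x, TopologicalSpace (E x)]
  [FiberBundle F E]

section ZeroSection

variable [∀ x, AddCommMonoid (E x)] [∀ x, Module 𝕜 (E x)] [VectorBundle 𝕜 F E]

theorem writtenInExtChartAt_zeroSection {z : B} {x : EB} (hx : x ∈ (extChartAt IB z).target)
    (hxz : (extChartAt IB z).symm x ∈ (trivializationAt F E z).baseSet) :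
    writtenInExtChartAt IB (IB.prod 𝓘(𝕜, F)) z (zeroSection F E) x = (x, 0) := by
  have h₀ : (trivializationAt F E z).toPartialEquiv (zeroSection F E ((extChartAt IB z).symm x))
      = ((extChartAt IB z).symm x, 0) := (trivializationAt F E z).zeroSection 𝕜 hxz
  rw [writtenInExtChartAt, FiberBundle.extChartAt, comp_apply, comp_apply, zeroSection_proj,
    PartialEquiv.trans_apply, h₀]
  exact Prod.ext ((extChartAt IB z).right_inv hx) rfl

theorem hasMFDerivAt_zeroSection (z : B) :
    HasMFDerivAt IB (IB.prod 𝓘(𝕜, F)) (zeroSection F E) z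
      (ContinuousLinearMap.inl 𝕜 EB F) := by
  refine ⟨(Trivialization.continuous_zeroSection 𝕜).continuousAt, ?_⟩
  have hz : (extChartAt IB z).symm (extChartAt IB z z) ∈ (trivializationAt F E z).baseSet := by
    rw [extChartAt_to_inv]; exact mem_baseSet_trivializationAt F E z
  have hbase : (extChartAt IB z).symm ⁻¹' (trivializationAt F E z).baseSet
      ∈ 𝓝[range IB] (extChartAt IB z z) :=
    mem_nhdsWithin_of_mem_nhds <| extChartAt_preimage_mem_nhds <|
      (trivializationAt F E z).open_baseSet.mem_nhds (mem_baseSet_trivializationAt F E z)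
  have hev : writtenInExtChartAt IB (IB.prod 𝓘(𝕜, F)) z (zeroSection F E)
      =ᶠ[𝓝[range IB] (extChartAt IB z z)] ContinuousLinearMap.inl 𝕜 EB F := by
    filter_upwards [extChartAt_target_mem_nhdsWithin z, hbase] with x hx hxz
    exact writtenInExtChartAt_zeroSection E hx hxz
  exact (ContinuousLinearMap.inl 𝕜 EB F).hasFDerivAt.hasFDerivWithinAt.congr_of_eventuallyEq hev
    (writtenInExtChartAt_zeroSection E (mem_extChartAt_target z) hz)

theorem mfderiv_apply_of_leftInverse_zeroSection {s : TotalSpace F E → B}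
    (hs : LeftInverse s (zeroSection F E)) {z : B}
    (hsz : MDifferentiableAt (IB.prod 𝓘(𝕜, F)) IB s (zeroSection F E z)) (v : EB) (w : F) :
    mfderiv (IB.prod 𝓘(𝕜, F)) IB s (zeroSection F E z) (v, w)
      = v + @id EB (mfderiv (IB.prod 𝓘(𝕜, F)) IB s (zeroSection F E z) (0, w)) := by
  set D := mfderiv (IB.prod 𝓘(𝕜, F)) IB s (zeroSection F E z)
  have hD : ContinuousLinearMap.id 𝕜 EB = D.comp (ContinuousLinearMap.inl 𝕜 EB F) := by
    have h := (hsz.hasMFDerivAt.comp z (hasMFDerivAt_zeroSection E z)).mfderiv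
    rwa [hs.comp_eq_id, mfderiv_id] at h
  have hv : D (v, 0) = v := (DFunLike.congr_fun hD v).symm
  rw [show ((v, w) : EB × F) = (v, 0) + (0, w) by simp]
  exact (D.map_add _ _).trans (congrArg (· + _) hv)

end ZeroSection

section Pullback

variable {EM : Type*} [NormedAddCommGroup EM] [NormedSpace 𝕜 EM]
  {HM : Type*} [TopologicalSpace HM] {IM : ModelWithCorners 𝕜 EM HM}
  {M : Type*} [TopologicalSpace M] [ChartedSpace HM M]
  (f : C(M, B)) {m₀ : M}

theorem Pullback.writtenInExtChartAt_lift [∀ x, Nonempty (E x)] (v₀ : (f *ᵖ E) m₀)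
    {p : EM × F} (hp : (extChartAt IM m₀).symm p.1 ∈ f ⁻¹' (trivializationAt F E (f m₀)).baseSet) :
    writtenInExtChartAt (IM.prod 𝓘(𝕜, F)) (IB.prod 𝓘(𝕜, F)) ⟨m₀, v₀⟩
        (Pullback.lift (F := F) f) p
      = (writtenInExtChartAt IM IB m₀ f p.1, p.2) := by
  set y := f ((extChartAt IM m₀).symm p.1)
  rw [writtenInExtChartAt, FiberBundle.extChartAt, FiberBundle.extChartAt]
  change (extChartAt IB (f m₀)).prod (PartialEquiv.refl F)
    (trivializationAt F E (f m₀) ⟨y, (trivializationAt F E (f m₀)).symm y p.2⟩) = _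
  rw [Trivialization.apply_mk_symm _ hp]
  rfl

theorem Pullback.hasMFDerivAt_lift [∀ x, Nonempty (E x)] (v₀ : (f *ᵖ E) m₀)
    {d : EM →L[𝕜] EB} (hd : HasMFDerivAt IM IB f m₀ d) :
    HasMFDerivAt (IM.prod 𝓘(𝕜, F)) (IB.prod 𝓘(𝕜, F)) (Pullback.lift (F := F) f)
      (⟨m₀, v₀⟩ : TotalSpace F (f *ᵖ E)) (d.prodMap (ContinuousLinearMap.id 𝕜 F)) := by
  refine ⟨(Pullback.continuous_lift F E f).continuousAt, ?_⟩
  set pt := extChartAt (IM.prod 𝓘(𝕜, F)) (⟨m₀, v₀⟩ : TotalSpace F (f *ᵖ E)) ⟨m₀, v₀⟩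
  have hfst : MapsTo Prod.fst (range (IM.prod 𝓘(𝕜, F))) (range IM) :=
    fun _ ⟨q, hq⟩ ↦ ⟨q.1, congrArg Prod.fst hq⟩
  have hbase : (extChartAt IM m₀).symm ⁻¹' (f ⁻¹' (trivializationAt F E (f m₀)).baseSet)
      ∈ 𝓝[range IM] pt.1 :=
    mem_nhdsWithin_of_mem_nhds <| extChartAt_preimage_mem_nhds <|
      f.continuous.continuousAt <|
        (trivializationAt F E (f m₀)).open_baseSet.mem_nhds (mem_baseSet_trivializationAt F E _)
  have hm₀ : (extChartAt IM m₀).symm pt.1 ∈ f ⁻¹' (trivializationAt F E (f m₀)).baseSet := by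
    rw [mem_preimage, show (extChartAt IM m₀).symm pt.1 = m₀ from extChartAt_to_inv m₀]
    exact mem_baseSet_trivializationAt F E _
  have hev : writtenInExtChartAt (IM.prod 𝓘(𝕜, F)) (IB.prod 𝓘(𝕜, F)) ⟨m₀, v₀⟩
      (Pullback.lift (F := F) f)
      =ᶠ[𝓝[range (IM.prod 𝓘(𝕜, F))] pt] Prod.map (writtenInExtChartAt IM IB m₀ f) id :=
    (continuous_fst.continuousWithinAt.tendsto_nhdsWithin hfst).eventually_mem hbase
      |>.mono fun _ hp ↦ Pullback.writtenInExtChartAt_lift E f v₀ hp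
  exact ((hd.2.mono (image_subset_iff.2 hfst)).prodMap pt
    (hasFDerivAt_id _).hasFDerivWithinAt).congr_of_eventuallyEq hev
    (Pullback.writtenInExtChartAt_lift E f v₀ hm₀)

theorem Pullback.mfderiv_comp_lift_zero_apply [∀ x, AddCommMonoid (E x)]
    [∀ x, Module 𝕜 (E x)] [VectorBundle 𝕜 F E] {s : TotalSpace F E → B}
    (hs : LeftInverse s (zeroSection F E)) {z : B} (hfm : f m₀ = z)
    (hf : MDifferentiableAt IM IB f m₀)
    (hsz : MDifferentiableAt (IB.prod 𝓘(𝕜, F)) IB s (zeroSection F E z)) (u : EM) (w : F) :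
    mfderiv (IM.prod 𝓘(𝕜, F)) IB (s ∘ Pullback.lift f) ⟨m₀, (0 : E (f m₀))⟩ (u, w)
      = @id EB (mfderiv IM IB f m₀ u)
        + @id EB (mfderiv (IB.prod 𝓘(𝕜, F)) IB s (zeroSection F E z) (0, w)) := by
  subst hfm
  have hD : HasMFDerivAt (IB.prod 𝓘(𝕜, F)) IB s (Pullback.lift f ⟨m₀, (0 : E (f m₀))⟩)
      (mfderiv (IB.prod 𝓘(𝕜, F)) IB s (zeroSection F E (f m₀))) := hsz.hasMFDerivAt
  rw [(hD.comp _ (Pullback.hasMFDerivAt_lift E f _ hf.hasMFDerivAt)).mfderiv]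
  exact mfderiv_apply_of_leftInverse_zeroSection E hs hsz _ _

end Pullback

end Bundle

theorem composed_spray_differential_and_domination_general
    {EZ : Type*} [NormedAddCommGroup EZ] [NormedSpace ℂ EZ]
    {Z : Type*} [TopologicalSpace Z] [ChartedSpace EZ Z]
    {F₁ : Type*} [NormedAddCommGroup F₁] [NormedSpace ℂ F₁]
    {F₂ : Type*} [NormedAddCommGroup F₂] [NormedSpace ℂ F₂]
    (E₁ : Z → Type*) [TopologicalSpace (TotalSpace F₁ E₁)]
    [∀ z, TopologicalSpace (E₁ z)] [∀ z, AddCommGroup (E₁ z)]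
    [FiberBundle F₁ E₁]
    (E₂ : Z → Type*) [TopologicalSpace (TotalSpace F₂ E₂)]
    [∀ z, TopologicalSpace (E₂ z)] [∀ z, AddCommGroup (E₂ z)] [∀ z, Module ℂ (E₂ z)]
    [FiberBundle F₂ E₂] [VectorBundle ℂ F₂ E₂]
    (s₁ : TotalSpace F₁ E₁ → Z)
    (hs₁ : MDifferentiable (𝓘(ℂ, EZ).prod 𝓘(ℂ, F₁)) 𝓘(ℂ, EZ) s₁)
    (hs₁0 : ∀ z : Z, s₁ ⟨z, (0 : E₁ z)⟩ = z)
    (s₂ : TotalSpace F₂ E₂ → Z)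
    (hs₂ : MDifferentiable (𝓘(ℂ, EZ).prod 𝓘(ℂ, F₂)) 𝓘(ℂ, EZ) s₂)
    (hs₂0 : ∀ z : Z, s₂ ⟨z, (0 : E₂ z)⟩ = z)
    -- `f` is the spray map `s₁`, bundled as a continuous map so that the pull-back
    -- bundle `E⁽²⁾ = s₁*(E₂) → E₁` carries its natural topology and charts
    (f : C(TotalSpace F₁ E₁, Z)) (hf : ⇑f = s₁)
    -- the composed spray `s⁽²⁾ : E⁽²⁾ → Z`, `s⁽²⁾(e₁, e₂) = s₂ e₂`
    (s' : TotalSpace F₂ (⇑f *ᵖ E₂) → Z)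
    (hs' : s' = fun q => s₂ (Bundle.Pullback.lift ⇑f q)) :
    (∀ (z : Z) (w₁ : F₁) (w₂ : F₂),
      @id EZ (mfderiv ((𝓘(ℂ, EZ).prod 𝓘(ℂ, F₁)).prod 𝓘(ℂ, F₂)) 𝓘(ℂ, EZ) s'
          ⟨⟨z, (0 : E₁ z)⟩, (0 : E₂ (f ⟨z, (0 : E₁ z)⟩))⟩
          (((0 : EZ), w₁), w₂))
        = @id EZ (mfderiv (𝓘(ℂ, EZ).prod 𝓘(ℂ, F₁)) 𝓘(ℂ, EZ) s₁ ⟨z, (0 : E₁ z)⟩ ((0 : EZ), w₁))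
          + @id EZ (mfderiv (𝓘(ℂ, EZ).prod 𝓘(ℂ, F₂)) 𝓘(ℂ, EZ) s₂ ⟨z, (0 : E₂ z)⟩
              ((0 : EZ), w₂))) ∧
    ((∀ (z : Z) (u : EZ), ∃ (w₁ : F₁) (w₂ : F₂),
        @id EZ (mfderiv (𝓘(ℂ, EZ).prod 𝓘(ℂ, F₁)) 𝓘(ℂ, EZ) s₁ ⟨z, (0 : E₁ z)⟩ ((0 : EZ), w₁))
          + @id EZ (mfderiv (𝓘(ℂ, EZ).prod 𝓘(ℂ, F₂)) 𝓘(ℂ, EZ) s₂ ⟨z, (0 : E₂ z)⟩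
              ((0 : EZ), w₂)) = u) →
      ∀ (z : Z) (u : EZ), ∃ (w₁ : F₁) (w₂ : F₂),
        @id EZ (mfderiv ((𝓘(ℂ, EZ).prod 𝓘(ℂ, F₁)).prod 𝓘(ℂ, F₂)) 𝓘(ℂ, EZ) s'
          ⟨⟨z, (0 : E₁ z)⟩, (0 : E₂ (f ⟨z, (0 : E₁ z)⟩))⟩
          (((0 : EZ), w₁), w₂)) = u) := by
  subst hf hs'
  have hd := fun (z : Z) (w₁ : F₁) (w₂ : F₂) ↦ Pullback.mfderiv_comp_lift_zero_apply E₂ f hs₂0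
    (hs₁0 z) (hs₁ _) (hs₂ _) ((0 : EZ), w₁) w₂
  refine ⟨hd, fun hdom z u ↦ ?_⟩
  obtain ⟨w₁, w₂, h⟩ := hdom z u
  exact ⟨w₁, w₂, (hd z w₁ w₂).trans h⟩

/-- Let `E₁ → Z`, `E₂ → Z` be holomorphic vector bundles and
`s₁ : E₁ → Z`, `s₂ : E₂ → Z` sprays on `Z` (so `s_j(0_z) = z`).  Form the composed
bundle `E⁽²⁾ = s₁*(E₂) → E₁` and the composed spray `s⁽²⁾(e₁,e₂) = s₂(e₂)`.  Then the
restriction of the differential of `s⁽²⁾` at the zero point `0_z` of `E⁽²⁾` over `z` to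
the vertical subspace `E_{1,z} ⊕ E_{2,z} ⊆ T_{0_z}E⁽²⁾` equals `(ds₁)_{0_z} ⊕ (ds₂)_{0_z}`;
in particular, if `(ds₁)_{0_z}(E_{1,z}) + (ds₂)_{0_z}(E_{2,z}) = T_z Z` for every `z`,
then the composed spray `s⁽²⁾` is dominating. -/
theorem composed_spray_differential_and_domination
    {EZ : Type*} [NormedAddCommGroup EZ] [NormedSpace ℂ EZ]
    {Z : Type*} [TopologicalSpace Z] [ChartedSpace EZ Z] [IsManifold 𝓘(ℂ, EZ) (⊤ : WithTop ℕ∞) Z]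
    {F₁ : Type*} [NormedAddCommGroup F₁] [NormedSpace ℂ F₁]
    {F₂ : Type*} [NormedAddCommGroup F₂] [NormedSpace ℂ F₂]
    (E₁ : Z → Type*) [TopologicalSpace (TotalSpace F₁ E₁)]
    [∀ z, TopologicalSpace (E₁ z)] [∀ z, AddCommGroup (E₁ z)] [∀ z, Module ℂ (E₁ z)]
    [FiberBundle F₁ E₁] [VectorBundle ℂ F₁ E₁] [ContMDiffVectorBundle (⊤ : ℕ∞) F₁ E₁ 𝓘(ℂ, EZ)]
    (E₂ : Z → Type*) [TopologicalSpace (TotalSpace F₂ E₂)]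
    [∀ z, TopologicalSpace (E₂ z)] [∀ z, AddCommGroup (E₂ z)] [∀ z, Module ℂ (E₂ z)]
    [FiberBundle F₂ E₂] [VectorBundle ℂ F₂ E₂] [ContMDiffVectorBundle (⊤ : ℕ∞) F₂ E₂ 𝓘(ℂ, EZ)]
    (s₁ : TotalSpace F₁ E₁ → Z)
    (hs₁ : MDifferentiable (𝓘(ℂ, EZ).prod 𝓘(ℂ, F₁)) 𝓘(ℂ, EZ) s₁)
    (hs₁0 : ∀ z : Z, s₁ ⟨z, (0 : E₁ z)⟩ = z)
    (s₂ : TotalSpace F₂ E₂ → Z)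
    (hs₂ : MDifferentiable (𝓘(ℂ, EZ).prod 𝓘(ℂ, F₂)) 𝓘(ℂ, EZ) s₂)
    (hs₂0 : ∀ z : Z, s₂ ⟨z, (0 : E₂ z)⟩ = z)
    -- `f` is the spray map `s₁`, bundled as a continuous map so that the pull-back
    -- bundle `E⁽²⁾ = s₁*(E₂) → E₁` carries its natural topology and charts
    (f : C(TotalSpace F₁ E₁, Z)) (hf : ⇑f = s₁)
    -- the composed spray `s⁽²⁾ : E⁽²⁾ → Z`, `s⁽²⁾(e₁, e₂) = s₂ e₂`
    (s' : TotalSpace F₂ (⇑f *ᵖ E₂) → Z)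
    (hs' : s' = fun q => s₂ (Bundle.Pullback.lift ⇑f q)) :
    (∀ (z : Z) (w₁ : F₁) (w₂ : F₂),
      @id EZ (mfderiv ((𝓘(ℂ, EZ).prod 𝓘(ℂ, F₁)).prod 𝓘(ℂ, F₂)) 𝓘(ℂ, EZ) s'
          ⟨⟨z, (0 : E₁ z)⟩, (0 : E₂ (f ⟨z, (0 : E₁ z)⟩))⟩
          (((0 : EZ), w₁), w₂))
        = @id EZ (mfderiv (𝓘(ℂ, EZ).prod 𝓘(ℂ, F₁)) 𝓘(ℂ, EZ) s₁ ⟨z, (0 : E₁ z)⟩ ((0 : EZ), w₁))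
          + @id EZ (mfderiv (𝓘(ℂ, EZ).prod 𝓘(ℂ, F₂)) 𝓘(ℂ, EZ) s₂ ⟨z, (0 : E₂ z)⟩
              ((0 : EZ), w₂))) ∧
    ((∀ (z : Z) (u : EZ), ∃ (w₁ : F₁) (w₂ : F₂),
        @id EZ (mfderiv (𝓘(ℂ, EZ).prod 𝓘(ℂ, F₁)) 𝓘(ℂ, EZ) s₁ ⟨z, (0 : E₁ z)⟩ ((0 : EZ), w₁))
          + @id EZ (mfderiv (𝓘(ℂ, EZ).prod 𝓘(ℂ, F₂)) 𝓘(ℂ, EZ) s₂ ⟨z, (0 : E₂ z)⟩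
              ((0 : EZ), w₂)) = u) →
      ∀ (z : Z) (u : EZ), ∃ (w₁ : F₁) (w₂ : F₂),
        @id EZ (mfderiv ((𝓘(ℂ, EZ).prod 𝓘(ℂ, F₁)).prod 𝓘(ℂ, F₂)) 𝓘(ℂ, EZ) s'
          ⟨⟨z, (0 : E₁ z)⟩, (0 : E₂ (f ⟨z, (0 : E₁ z)⟩))⟩
          (((0 : EZ), w₁), w₂)) = u) :=
  composed_spray_differential_and_domination_general E₁ E₂ s₁ hs₁ hs₁0 s₂ hs₂ hs₂0 f hf s' hs'
end
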